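/- Let Θ be a subset of d-dimensional Euclidean space, let x ∈ ℝ^d with dist(x, Θ) > 0, and let p : ℝ^d → ℝ^d be a map that is differentiable at x and satisfies, for every y in some neighborhood of x, that p(y) ∈ Θ and ‖y − p(y)‖ = dist(y, Θ). Then the distance function y ↦ dist(y, Θ) is differentiable at x, with derivative given by v ↦ ⟨(x − p(x))/‖x − p(x)‖, v⟩; that is, its gradient at x is the unit vector (x − p(x))/‖x − p(x)‖. -/

import Mathlib

/-!
Near `x` the distance function equals `y ↦ ‖y - p y‖`, the norm of a map differentiable at `x`
and nonzero there, so the chain rule gives the derivative `v ↦ ⟪u, v - p' v⟫` with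
`u = (x - p x)/‖x - p x‖`. The term `⟪u, p' v⟫` vanishes: since `p y ∈ Θ`, the function
`y ↦ ‖x - p y‖` attains its minimum `dist(x, Θ)` at `y = x`, so `x - p x` is orthogonal to the
range of `p'`.
-/

open scoped RealInnerProductSpace

open Metric

theorem isLocalMin_norm_sub_of_eventually_mem {E F : Type*} [SeminormedAddCommGroup E]
    [TopologicalSpace F] {Θ : Set E} {a : E} {p : F → E} {x : F}
    (hΘ : ∀ᶠ y in nhds x, p y ∈ Θ) (hx : ‖a - p x‖ = infDist a Θ) :
    IsLocalMin (fun y => ‖a - p y‖) x := by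
  filter_upwards [hΘ] with y hy
  rw [hx, ← dist_eq_norm]
  exact infDist_le_dist_of_mem hy

section InnerProductSpace

variable {E : Type*} [NormedAddCommGroup E] [InnerProductSpace ℝ E]

theorem hasFDerivAt_norm {u : E} (hu : u ≠ 0) :
    HasFDerivAt (‖·‖) (innerSL ℝ (‖u‖⁻¹ • u)) u := by
  have h := (hasStrictFDerivAt_norm_sq u).hasFDerivAt.sqrt (by positivity)
  simp only [Real.sqrt_sq (norm_nonneg _)] at h
  refine h.congr_fderiv ?_
  ext v
  simp only [one_div, mul_inv_rev, smul_apply, coe_innerSL_apply,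
    nsmul_eq_mul, Nat.cast_ofNat, smul_eq_mul, map_smul]
  field_simp

theorem innerSL_comp_eq_zero_of_isLocalMin_norm_sub {F : Type*} [NormedAddCommGroup F]
    [NormedSpace ℝ F] {p : F → E} {p' : F →L[ℝ] E} {x : F} (a : E) (hp : HasFDerivAt p p' x)
    (hmin : IsLocalMin (fun y => ‖a - p y‖) x) :
    (innerSL ℝ (a - p x)).comp p' = 0 := by
  have hmin_sq : IsLocalMin (fun y => ‖a - p y‖ ^ 2) x := by
    filter_upwards [hmin] with y hy
    exact pow_le_pow_left₀ (norm_nonneg _) hy 2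
  have hderiv : 2 • (innerSL ℝ (a - p x)).comp (0 - p') = 0 :=
    hmin_sq.hasFDerivAt_eq_zero ((hasFDerivAt_const a x).sub hp).norm_sq
  rwa [zero_sub, ContinuousLinearMap.comp_neg, smul_neg, neg_eq_zero,
    ← ofNat_smul_eq_nsmul ℝ, (isUnit_of_invertible (2 : ℝ)).smul_eq_zero] at hderiv

end InnerProductSpace

/-- Let `Θ ⊆ ℝ^d`, let `x` with `dist(x,Θ) > 0`, and let `p` be
differentiable at `x` such that for every `y` in a neighborhood of `x`, `p y ∈ Θ` and
`‖y - p y‖ = dist(y, Θ)`. Then `y ↦ dist(y, Θ)` is differentiable at `x` with derivative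
`v ↦ ⟨(x - p x)/‖x - p x‖, v⟩`, i.e. gradient the unit vector `(x - p x)/‖x - p x‖`. -/
theorem statement3 {d : ℕ} (Θ : Set (EuclideanSpace ℝ (Fin d)))
    (x : EuclideanSpace ℝ (Fin d))
    (hx : 0 < Metric.infDist x Θ)
    (p : EuclideanSpace ℝ (Fin d) → EuclideanSpace ℝ (Fin d))
    (p' : EuclideanSpace ℝ (Fin d) →L[ℝ] EuclideanSpace ℝ (Fin d))
    (hp : HasFDerivAt p p' x)
    (hloc : ∀ᶠ y in nhds x, p y ∈ Θ ∧ ‖y - p y‖ = Metric.infDist y Θ) :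
    HasFDerivAt (fun y => Metric.infDist y Θ)
      (innerSL ℝ (‖x - p x‖⁻¹ • (x - p x))) x := by
  obtain ⟨-, hpx⟩ := hloc.self_of_nhds
  have hne : x - p x ≠ 0 := norm_pos_iff.mp (hpx ▸ hx)
  have hperp : (innerSL ℝ (‖x - p x‖⁻¹ • (x - p x))).comp p' = 0 := by
    rw [map_smul, ContinuousLinearMap.smul_comp,
      innerSL_comp_eq_zero_of_isLocalMin_norm_sub x hp
        (isLocalMin_norm_sub_of_eventually_mem (hloc.mono fun _ h => h.1) hpx), smul_zero]
  have hnorm := (hasFDerivAt_norm hne).comp x ((hasFDerivAt_id x).sub hp)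
  rw [ContinuousLinearMap.comp_sub, ContinuousLinearMap.comp_id, hperp, sub_zero] at hnorm
  exact hnorm.congr_of_eventuallyEq (hloc.mono fun _ h => h.2.symm)
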